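/- arXiv:0903.5457 — 2 statements merged into one kernel-verified Lean document; each statement's English description precedes it below -/
import Mathlib

section
/- Let H0 be a self-adjoint operator, B a symmetric operator with D(H0) ⊆ D(B) such that H = H0 + B is self-adjoint on D(H0), and assume D = D^∞(H0) = D^∞(H). Then on L†(D) the locally convex topology defined by the seminorms A ↦ max{‖H0^k A f(H0)‖, ‖f(H0) A H0^k‖} (f ∈ F, k ∈ ℕ) and the locally convex topology defined by the seminorms A ↦ max{‖H^k A f(H)‖, ‖f(H) A H^k‖} (f ∈ F, k ∈ ℕ) are equivalent. -/
/-!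
Write `S`, `T` for the two self-adjoint operators and `D` for their common C^∞-vectors. As
`ψ ↦ (Tⁿψ)ₙ` embeds `D` as a closed subspace of `ℕ → 𝓗`, `D` is a Fréchet space, hence
barrelled, and the Banach–Steinhaus theorem bounds every operator on `D` that has a formal
adjoint by finitely many graph norms `‖Tⁿψ‖`. In particular the powers of `S` and of `T`
dominate each other on `D`.

Fix `f ∈ F`. From the resulting bounds `‖Tʳ f(S) φ‖ ≤ bᵣ ‖φ‖` we build `g ∈ F`, piecewise
linear with value `(K+1)^(-ρ K)` at `K`, where `ρ → ∞` so slowly that `b (4 ρ K) ≤ max b₀ K`.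
Then `f(S) φ = g(T) χ` with `χ ∈ D` and `‖χ‖ ≤ C ‖φ‖`: `χ` is the limit of
`1_[0,K](T) g(T)⁻¹ f(S) φ`, which converges with all its `T`-powers, so `χ ∈ D` as `T` is
closed. Hence `‖Sᵏ A f(S) φ‖ ≤ C Σ_{m ≤ N} ‖Tᵐ A g(T)‖ ‖φ‖`. For the other half of the
seminorm, `‖f(S) A Sᵏ‖ = ‖Sᵏ A† f(S)‖` and `‖Tᵐ A† g(T)‖ = ‖g(T) A Tᵐ‖`, so the same
estimate applied to `A†` suffices.
-/

open scoped ComplexInnerProductSpace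

namespace Paper

/-- An unbounded linear operator in a Hilbert space `𝓗`, encoded by a distinguished
domain together with a globally defined linear extension of its action. -/
structure Op (𝓗 : Type*) [NormedAddCommGroup 𝓗] [InnerProductSpace ℂ 𝓗] where
  dom : Submodule ℂ 𝓗
  op : 𝓗 →ₗ[ℂ] 𝓗

variable {𝓗 : Type*} [NormedAddCommGroup 𝓗] [InnerProductSpace ℂ 𝓗]

namespace Op

/-- `T.pw k` is the `k`-th power `T^k` of `T`, as a function. -/
def pw (T : Op 𝓗) (k : ℕ) : 𝓗 → 𝓗 := (fun x => T.op x)^[k]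

/-- The domain `D(Tⁿ)` of the `n`-th power of `T`. -/
def domPow (T : Op 𝓗) : ℕ → Set 𝓗
  | 0 => Set.univ
  | n + 1 => {x | x ∈ T.dom ∧ T.op x ∈ T.domPow n}

/-- The set of C^∞-vectors `D^∞(T) = ⋂ₙ D(Tⁿ)`. -/
def Dinf (T : Op 𝓗) : Set 𝓗 := ⋂ n : ℕ, T.domPow n

/-- `T` is symmetric. -/
def Symmetric (T : Op 𝓗) : Prop :=
  ∀ x ∈ T.dom, ∀ y ∈ T.dom, ⟪T.op x, y⟫ = ⟪x, T.op y⟫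

/-- Self-adjointness: densely defined, symmetric, and every vector in the domain of the
adjoint already belongs to the domain (on which the adjoint acts as the operator). -/
def IsSelfAdjoint (T : Op 𝓗) : Prop :=
  Dense (T.dom : Set 𝓗) ∧ T.Symmetric ∧
    ∀ y z : 𝓗, (∀ x ∈ T.dom, ⟪T.op x, y⟫ = ⟪x, z⟫) → y ∈ T.dom ∧ T.op y = z

/-- `T ≥ 1`. -/
def GeOne (T : Op 𝓗) : Prop := ∀ x ∈ T.dom, ‖x‖ ^ 2 ≤ (⟪T.op x, x⟫).re

/-- The perturbed operator `T + B`, with domain `D(T)`. -/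
def pert (T B : Op 𝓗) : Op 𝓗 := ⟨T.dom, T.op + B.op⟩

/-- The graph topology `t_T` on a subset `D`, generated by the seminorms `φ ↦ ‖Tⁿφ‖`,
i.e. the initial topology for the maps `φ ↦ Tⁿφ`. -/
def graphTopOn (T : Op 𝓗) (D : Set 𝓗) : TopologicalSpace D :=
  ⨅ n : ℕ, TopologicalSpace.induced (fun φ : D => T.pw n ↑φ) inferInstance

end Op

/-- `D0` is a core for the `k`-th power of `T`. -/
def IsCorePow (T : Op 𝓗) (k : ℕ) (D0 : Set 𝓗) : Prop :=
  D0 ⊆ T.domPow k ∧ ∀ x ∈ T.domPow k, ∃ u : ℕ → 𝓗, (∀ n, u n ∈ D0) ∧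
    Filter.Tendsto u Filter.atTop (nhds x) ∧
    Filter.Tendsto (fun n => T.pw k (u n)) Filter.atTop (nhds (T.pw k x))

/-- Membership in the O*-algebra `L†(D)`: `A` maps `D` into `D`, `D ⊆ D(A*)` and
`A* D ⊆ D` (witnessed by `Adag`). -/
def MemLdag (D : Set 𝓗) (A : 𝓗 →ₗ[ℂ] 𝓗) : Prop :=
  (∀ x ∈ D, A x ∈ D) ∧
    ∃ Adag : 𝓗 →ₗ[ℂ] 𝓗, (∀ x ∈ D, Adag x ∈ D) ∧
      ∀ x ∈ D, ∀ y ∈ D, ⟪A x, y⟫ = ⟪x, Adag y⟫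

/-- The operator norm of (the bounded extension of) `A`, computed on the unit ball of `D`. -/
noncomputable def opNormOn (D : Set 𝓗) (A : 𝓗 → 𝓗) : ℝ :=
  ⨆ φ : {ψ : 𝓗 // ψ ∈ D ∧ ‖ψ‖ ≤ 1}, ‖A ↑φ‖

/-- The class `F` of positive, bounded, continuous functions on `[0,∞)` which decrease
faster than any inverse power of `x`. -/
def IsInF (f : ℝ → ℝ) : Prop :=
  Continuous f ∧ (∀ x : ℝ, 0 ≤ x → 0 < f x) ∧
    ∀ k : ℕ, ∃ M : ℝ, ∀ x : ℝ, 0 ≤ x → x ^ k * f x ≤ M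

/-- The bounded measurable functional calculus of a self-adjoint operator `T` whose
spectrum is contained in `[a, ∞)`. -/
structure FnCalc (T : Op 𝓗) (a : ℝ) where
  Φ : (ℝ → ℝ) → (𝓗 →L[ℂ] 𝓗)
  Φ_one : Φ (fun _ => 1) = 1
  Φ_add : ∀ f g : ℝ → ℝ, Measurable f → Measurable g →
    Φ (fun t => f t + g t) = Φ f + Φ g
  Φ_mul : ∀ f g : ℝ → ℝ, Measurable f → Measurable g →
    Φ (fun t => f t * g t) = (Φ f).comp (Φ g)
  Φ_symm : ∀ (f : ℝ → ℝ) (x y : 𝓗), ⟪Φ f x, y⟫ = ⟪x, Φ f y⟫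
  Φ_norm : ∀ (f : ℝ → ℝ) (M : ℝ), (∀ t : ℝ, a ≤ t → |f t| ≤ M) →
    ∀ x : 𝓗, ‖Φ f x‖ ≤ M * ‖x‖
  Φ_supp : ∀ f : ℝ → ℝ, Measurable f → (∀ t : ℝ, a ≤ t → f t = 0) → Φ f = 0
  Φ_pos : ∀ f : ℝ → ℝ, Measurable f → (∀ t : ℝ, a ≤ t → 0 ≤ f t) →
    ∀ x : 𝓗, 0 ≤ (⟪Φ f x, x⟫).re
  Φ_dom : ∀ f : ℝ → ℝ, Measurable f → (∃ M : ℝ, ∀ t : ℝ, a ≤ t → |t * f t| ≤ M) →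
    ∀ x : 𝓗, Φ f x ∈ T.dom ∧ T.op (Φ f x) = Φ (fun t => t * f t) x
  Q_tendsto : ∀ x : 𝓗, Filter.Tendsto
    (fun L : ℝ => Φ (Set.indicator (Set.Icc a L) fun _ => (1 : ℝ)) x)
    Filter.atTop (nhds x)

/-- The spectral projection `Q_L = E([a, L])` of `T`. -/
noncomputable def FnCalc.Q {T : Op 𝓗} {a : ℝ} (c : FnCalc T a) (L : ℝ) : 𝓗 →L[ℂ] 𝓗 :=
  c.Φ (Set.indicator (Set.Icc a L) fun _ => (1 : ℝ))

/-- The seminorm `A ↦ max{‖Tᵏ A f(T)‖, ‖f(T) A Tᵏ‖}` of the quasi-uniform topology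
`τ_*` on `L†(D)`. -/
noncomputable def qseminorm {T : Op 𝓗} {a : ℝ} (c : FnCalc T a) (D : Set 𝓗)
    (f : ℝ → ℝ) (k : ℕ) (A : 𝓗 →ₗ[ℂ] 𝓗) : ℝ :=
  max (opNormOn D fun φ => T.pw k (A (c.Φ f φ)))
      (opNormOn D fun φ => c.Φ f (A (T.pw k φ)))

/-- `i[A,T] = i(A T - T A)`, as a function. -/
noncomputable def commI (A T : 𝓗 → 𝓗) : 𝓗 → 𝓗 :=
  fun φ => Complex.I • (A (T φ) - T (A φ))

/-- Iterated commutators: `itComm A B j = [A, B]_j`, with `[A,B]_0 = B` and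
`[A,B]_{j+1} = [A, [A,B]_j]`. -/
def itComm (A B : 𝓗 → 𝓗) : ℕ → (𝓗 → 𝓗)
  | 0 => B
  | j + 1 => fun φ => A (itComm A B j φ) - itComm A B j (A φ)

open Filter Topology

namespace Op

lemma pw_eq_pow_apply (T : Op 𝓗) (k : ℕ) (x : 𝓗) : T.pw k x = (T.op ^ k) x :=
  (Module.End.pow_apply _ _ _).symm

@[simp]
lemma pw_zero (T : Op 𝓗) (x : 𝓗) : T.pw 0 x = x := rfl

lemma pw_succ (T : Op 𝓗) (k : ℕ) (x : 𝓗) : T.pw (k + 1) x = T.pw k (T.op x) :=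
  Function.iterate_succ_apply _ _ _

lemma pw_succ' (T : Op 𝓗) (k : ℕ) (x : 𝓗) : T.pw (k + 1) x = T.op (T.pw k x) :=
  Function.iterate_succ_apply' _ _ _

lemma pw_smul (T : Op 𝓗) (k : ℕ) (a : ℂ) (x : 𝓗) : T.pw k (a • x) = a • T.pw k x := by
  simp only [pw_eq_pow_apply, map_smul]

def domPowSubmodule (T : Op 𝓗) : ℕ → Submodule ℂ 𝓗
  | 0 => ⊤
  | n + 1 => T.dom ⊓ (T.domPowSubmodule n).comap T.op

lemma coe_domPowSubmodule (T : Op 𝓗) (n : ℕ) :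
    (T.domPowSubmodule n : Set 𝓗) = T.domPow n := by
  induction n with
  | zero => rfl
  | succ n ih =>
    ext x
    simp [domPowSubmodule, domPow, ← ih]

def dinfSubmodule (T : Op 𝓗) : Submodule ℂ 𝓗 := ⨅ n, T.domPowSubmodule n

lemma coe_dinfSubmodule (T : Op 𝓗) : (T.dinfSubmodule : Set 𝓗) = T.Dinf := by
  simp [dinfSubmodule, coe_domPowSubmodule, Dinf]

variable {T : Op 𝓗} {x y : 𝓗}

lemma mem_Dinf_iff : x ∈ T.Dinf ↔ ∀ n, x ∈ T.domPow n := Set.mem_iInter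

lemma smul_mem_Dinf (a : ℂ) (hx : x ∈ T.Dinf) : a • x ∈ T.Dinf := by
  rw [← coe_dinfSubmodule] at hx ⊢
  exact T.dinfSubmodule.smul_mem a hx

lemma mem_dom_of_mem_Dinf (hx : x ∈ T.Dinf) : x ∈ T.dom :=
  (mem_Dinf_iff.1 hx 1).1

lemma op_mem_Dinf (hx : x ∈ T.Dinf) : T.op x ∈ T.Dinf :=
  mem_Dinf_iff.2 fun n => (mem_Dinf_iff.1 hx (n + 1)).2

lemma pw_mem_Dinf (hx : x ∈ T.Dinf) (k : ℕ) : T.pw k x ∈ T.Dinf := by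
  induction k with
  | zero => exact hx
  | succ k ih => rw [pw_succ']; exact op_mem_Dinf ih

lemma Symmetric.inner_pw (hT : T.Symmetric) (hx : x ∈ T.Dinf) (hy : y ∈ T.Dinf) (k : ℕ) :
    ⟪T.pw k x, y⟫ = ⟪x, T.pw k y⟫ := by
  induction k generalizing x with
  | zero => rfl
  | succ k ih =>
    rw [pw_succ, ih (op_mem_Dinf hx), pw_succ']
    exact hT x (mem_dom_of_mem_Dinf hx) _ (mem_dom_of_mem_Dinf (pw_mem_Dinf hy k))

lemma IsSelfAdjoint.mem_dom_of_tendsto (hT : T.IsSelfAdjoint) {u : ℕ → 𝓗}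
    (hu : ∀ m, u m ∈ T.dom) (hx : Tendsto u atTop (𝓝 x))
    (hy : Tendsto (fun m => T.op (u m)) atTop (𝓝 y)) : x ∈ T.dom ∧ T.op x = y := by
  refine hT.2.2 x y fun w hw => tendsto_nhds_unique (tendsto_const_nhds.inner hx) ?_
  simpa only [hT.2.1 w hw _ (hu _)] using tendsto_const_nhds.inner hy

lemma IsSelfAdjoint.mem_Dinf_of_tendsto (hT : T.IsSelfAdjoint) {u y : ℕ → 𝓗}
    (hu : ∀ m, u m ∈ T.Dinf) (hy : ∀ n, Tendsto (fun m => T.pw n (u m)) atTop (𝓝 (y n))) :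
    y 0 ∈ T.Dinf ∧ ∀ n, T.pw n (y 0) = y n := by
  have step : ∀ n, y n ∈ T.dom ∧ T.op (y n) = y (n + 1) := fun n =>
    hT.mem_dom_of_tendsto (fun m => mem_dom_of_mem_Dinf (pw_mem_Dinf (hu m) n)) (hy n)
      (by simpa only [pw_succ'] using hy (n + 1))
  have hmem : ∀ n j, y j ∈ T.domPow n := by
    intro n
    induction n with
    | zero => exact fun _ => trivial
    | succ n ih => exact fun j => ⟨(step j).1, (step j).2 ▸ ih (j + 1)⟩
  refine ⟨mem_Dinf_iff.2 fun n => hmem n 0, fun n => ?_⟩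
  induction n with
  | zero => rfl
  | succ n ih => rw [pw_succ', ih, (step n).2]

end Op

def RapidDecay (f : ℝ → ℝ) : Prop :=
  Measurable f ∧ ∀ n : ℕ, ∃ M : ℝ, ∀ t : ℝ, 0 ≤ t → |t ^ n * f t| ≤ M

lemma RapidDecay.id_mul {f : ℝ → ℝ} (hf : RapidDecay f) : RapidDecay fun t => t * f t := by
  refine ⟨measurable_id.mul hf.1, fun n => ?_⟩
  obtain ⟨M, hM⟩ := hf.2 (n + 1)
  exact ⟨M, fun t ht => by simpa only [pow_succ, mul_assoc] using hM t ht⟩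

lemma IsInF.rapidDecay {f : ℝ → ℝ} (hf : IsInF f) : RapidDecay f := by
  refine ⟨hf.1.measurable, fun n => ?_⟩
  obtain ⟨M, hM⟩ := hf.2.2 n
  refine ⟨M, fun t ht => ?_⟩
  rw [abs_of_nonneg (mul_nonneg (pow_nonneg ht n) (hf.2.1 t ht).le)]
  exact hM t ht

lemma rapidDecay_indicator_Icc {f : ℝ → ℝ} (hf : Continuous f) (L : ℝ) :
    RapidDecay (Set.indicator (Set.Icc 0 L) f) := by
  obtain ⟨B, hB⟩ := (isCompact_Icc (a := (0 : ℝ)) (b := L)).exists_bound_of_continuousOn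
    hf.continuousOn
  refine ⟨hf.measurable.indicator measurableSet_Icc, fun n => ⟨max 0 L ^ n * |B|, fun t ht => ?_⟩⟩
  by_cases h : t ∈ Set.Icc 0 L
  · rw [Set.indicator_of_mem h, abs_mul, abs_of_nonneg (pow_nonneg ht n)]
    exact mul_le_mul (pow_le_pow_left₀ ht (h.2.trans (le_max_right 0 L)) n)
      ((hB t h).trans (le_abs_self B)) (abs_nonneg _) (by positivity)
  · rw [Set.indicator_of_notMem h, mul_zero, abs_zero]
    positivity

namespace FnCalc

variable {T : Op 𝓗} (c : FnCalc T 0) {f : ℝ → ℝ}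

lemma Φ_mem_domPow_and_pw_Φ (hf : RapidDecay f) (x : 𝓗) (n : ℕ) :
    c.Φ f x ∈ T.domPow n ∧ T.pw n (c.Φ f x) = c.Φ (fun t => t ^ n * f t) x := by
  induction n generalizing f with
  | zero => exact ⟨trivial, by simp⟩
  | succ n ih =>
    obtain ⟨M, hM⟩ := hf.2 1
    have hdom := c.Φ_dom f hf.1 ⟨M, fun t ht => by simpa using hM t ht⟩ x
    obtain ⟨ihm, ihe⟩ := ih hf.id_mul
    refine ⟨⟨hdom.1, hdom.2 ▸ ihm⟩, ?_⟩
    rw [Op.pw_succ, hdom.2, ihe]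
    simp only [pow_succ, mul_assoc]

lemma Φ_mem_Dinf (hf : RapidDecay f) (x : 𝓗) : c.Φ f x ∈ T.Dinf :=
  Op.mem_Dinf_iff.2 fun n => (c.Φ_mem_domPow_and_pw_Φ hf x n).1

lemma pw_Φ (hf : RapidDecay f) (x : 𝓗) (n : ℕ) :
    T.pw n (c.Φ f x) = c.Φ (fun t => t ^ n * f t) x :=
  (c.Φ_mem_domPow_and_pw_Φ hf x n).2

lemma Φ_pw (hT : T.Symmetric) (hf : RapidDecay f) {x : 𝓗} (hx : x ∈ T.Dinf) (n : ℕ) :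
    c.Φ f (T.pw n x) = c.Φ (fun t => t ^ n * f t) x := by
  refine ext_inner_right ℂ fun y => ?_
  rw [c.Φ_symm, hT.inner_pw hx (c.Φ_mem_Dinf hf y), c.pw_Φ hf, c.Φ_symm]

lemma Φ_sub {g : ℝ → ℝ} (hf : Measurable f) (hg : Measurable g) (x : 𝓗) :
    c.Φ (fun t => f t - g t) x = c.Φ f x - c.Φ g x := by
  have h := c.Φ_add (fun t => f t - g t) g (hf.sub hg) hg
  simp only [sub_add_cancel] at h
  simp [h]

lemma dense_Dinf (c : FnCalc T 0) : Dense T.Dinf := fun x =>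
  mem_closure_of_tendsto (c.Q_tendsto x) <|
    Eventually.of_forall fun L => c.Φ_mem_Dinf (rapidDecay_indicator_Icc continuous_const L) x

lemma exists_norm_pw_Φ_le (hf : RapidDecay f) (n : ℕ) :
    ∃ M, 0 ≤ M ∧ ∀ x, ‖T.pw n (c.Φ f x)‖ ≤ M * ‖x‖ := by
  obtain ⟨M, hM⟩ := hf.2 n
  refine ⟨M, (abs_nonneg _).trans (hM 0 le_rfl), fun x => ?_⟩
  rw [c.pw_Φ hf]
  exact c.Φ_norm _ M hM x

lemma norm_Φ_le_mul_norm_pw (hT : T.Symmetric) {u : ℝ → ℝ} (hu : Measurable u) {L : ℝ}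
    (hL : ∀ t, L < t → u t = 0) {M : ℝ} {r : ℕ} (hM : ∀ t, 0 ≤ t → |u t| ≤ M * t ^ r)
    {x : 𝓗} (hx : x ∈ T.Dinf) : ‖c.Φ u x‖ ≤ M * ‖T.pw r x‖ := by
  have hM0 : 0 ≤ M := by simpa using (abs_nonneg _).trans (hM 1 zero_le_one)
  set w : ℝ → ℝ := fun t => u t / t ^ r
  have hw : ∀ t, 0 ≤ t → |w t| ≤ M := fun t ht => by
    rw [abs_div, abs_of_nonneg (pow_nonneg ht r)]
    exact div_le_of_le_mul₀ (pow_nonneg ht r) hM0 (hM t ht)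
  have hwu : (fun t => t ^ r * w t) = u := funext fun t => by
    rcases eq_or_ne (t ^ r) 0 with h | h
    · obtain ⟨rfl, hr⟩ := pow_eq_zero_iff'.1 h
      have := hM 0 le_rfl
      rw [zero_pow hr, mul_zero, abs_nonpos_iff] at this
      simp [w, this]
    · exact mul_div_cancel₀ _ h
  have hwd : RapidDecay w := by
    refine ⟨hu.div (measurable_id.pow_const r), fun m => ⟨max 0 L ^ m * M, fun t ht => ?_⟩⟩
    rw [abs_mul, abs_of_nonneg (pow_nonneg ht m)]
    by_cases htL : t ≤ L
    · exact mul_le_mul (pow_le_pow_left₀ ht (htL.trans (le_max_right 0 L)) m) (hw t ht)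
        (abs_nonneg _) (by positivity)
    · simp only [w, hL t (not_le.1 htL), zero_div, abs_zero, mul_zero]
      positivity
  rw [← hwu, ← c.Φ_pw hT hwd hx]
  exact c.Φ_norm w M hw _

end FnCalc

lemma norm_le_of_dense_inner_le {D : Set 𝓗} (hD : Dense D) {v : 𝓗} {M : ℝ} (hM : 0 ≤ M)
    (h : ∀ y ∈ D, ‖⟪v, y⟫‖ ≤ M * ‖y‖) : ‖v‖ ≤ M := by
  have hv : ‖⟪v, v⟫‖ ≤ M * ‖v‖ :=
    closure_minimal h (isClosed_le (f := fun y => ‖⟪v, y⟫‖) (by fun_prop) (by fun_prop)) (hD v)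
  rw [inner_self_eq_norm_sq_to_K, norm_pow, RCLike.norm_ofReal, abs_norm, sq] at hv
  rcases (norm_nonneg v).eq_or_lt with h0 | hpos
  · rwa [← h0]
  · exact le_of_mul_le_mul_right hv hpos

lemma norm_le_of_inner_eq_inner {D : Set 𝓗} (hD : Dense D) {v φ : 𝓗} {w : 𝓗 → 𝓗} {M : ℝ}
    (hM : 0 ≤ M) (hw : ∀ y ∈ D, ⟪v, y⟫ = ⟪φ, w y⟫) (hwM : ∀ y ∈ D, ‖w y‖ ≤ M * ‖y‖) :
    ‖v‖ ≤ M * ‖φ‖ :=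
  norm_le_of_dense_inner_le hD (by positivity) fun y hy =>
    calc ‖⟪v, y⟫‖ = ‖⟪φ, w y⟫‖ := by rw [hw y hy]
      _ ≤ ‖φ‖ * (M * ‖y‖) := (norm_inner_le_norm _ _).trans (by gcongr; exact hwM y hy)
      _ = M * ‖φ‖ * ‖y‖ := by ring

lemma norm_le_of_dense_inner_le_of_norm_le_one {D : Set 𝓗} (hD : Dense D)
    (hDs : ∀ (a : ℂ), ∀ y ∈ D, a • y ∈ D) {v : 𝓗} {M : ℝ} (hM : 0 ≤ M)
    (h : ∀ y ∈ D, ‖y‖ ≤ 1 → ‖⟪v, y⟫‖ ≤ M) : ‖v‖ ≤ M := by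
  refine norm_le_of_dense_inner_le hD hM fun y hy => ?_
  rcases eq_or_ne y 0 with rfl | hne
  · simp
  have hpos : 0 < ‖y‖ := norm_pos_iff.2 hne
  have h1 := h _ (hDs ((‖y‖⁻¹ : ℝ) : ℂ) y hy) (by
    rw [norm_smul, Complex.norm_real, Real.norm_of_nonneg (by positivity),
      inv_mul_cancel₀ hpos.ne'])
  rw [inner_smul_right, norm_mul, Complex.norm_real, Real.norm_of_nonneg (by positivity),
    inv_mul_le_iff₀ hpos] at h1
  linarith

section opNormOn

variable {E : Type*} [NormedAddCommGroup E] {D : Set E} {F : E → E}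

lemma opNormOn_nonneg (D : Set E) (F : E → E) : 0 ≤ opNormOn D F :=
  Real.iSup_nonneg fun _ => norm_nonneg _

lemma opNormOn_le {M : ℝ} (hM : 0 ≤ M) (h : ∀ ψ ∈ D, ‖ψ‖ ≤ 1 → ‖F ψ‖ ≤ M) :
    opNormOn D F ≤ M :=
  Real.iSup_le (fun φ => h φ φ.2.1 φ.2.2) hM

lemma opNormOn_le_of_norm_le {M : ℝ} (hM : 0 ≤ M) (h : ∀ ψ ∈ D, ‖F ψ‖ ≤ M * ‖ψ‖) :
    opNormOn D F ≤ M :=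
  opNormOn_le hM fun ψ hψ hψ1 => (h ψ hψ).trans (mul_le_of_le_one_right hM hψ1)

lemma norm_le_opNormOn_mul [NormedSpace ℂ E] (hD : ∀ (a : ℂ), ∀ ψ ∈ D, a • ψ ∈ D)
    (hF : ∀ (a : ℂ) ψ, F (a • ψ) = a • F ψ) {M : ℝ} (hM : ∀ ψ ∈ D, ‖F ψ‖ ≤ M * ‖ψ‖)
    {ψ : E} (hψ : ψ ∈ D) : ‖F ψ‖ ≤ opNormOn D F * ‖ψ‖ := by
  rcases eq_or_ne ψ 0 with rfl | hne
  · simpa using hF 0 0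
  have hpos : 0 < ‖ψ‖ := norm_pos_iff.2 hne
  have hbdd : BddAbove (Set.range fun φ : {ψ : E // ψ ∈ D ∧ ‖ψ‖ ≤ 1} => ‖F φ‖) :=
    ⟨|M|, by
      rintro _ ⟨φ, rfl⟩
      exact (hM φ φ.2.1).trans (mul_le_mul (le_abs_self M) φ.2.2 (norm_nonneg _) (abs_nonneg M)
        |>.trans_eq (mul_one _))⟩
  set a : ℂ := ((‖ψ‖⁻¹ : ℝ) : ℂ)
  have hna : ‖a • ψ‖ = 1 := by
    rw [norm_smul, Complex.norm_real, Real.norm_of_nonneg (by positivity), inv_mul_cancel₀ hpos.ne']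
  have h1 : ‖F (a • ψ)‖ ≤ opNormOn D F := le_ciSup hbdd ⟨a • ψ, hD a ψ hψ, hna.le⟩
  rw [hF, norm_smul, Complex.norm_real, Real.norm_of_nonneg (by positivity)] at h1
  rwa [inv_mul_le_iff₀ hpos, mul_comm] at h1

lemma opNormOn_le_opNormOn_of_inner_eq {D : Set 𝓗} {F F' : 𝓗 → 𝓗} (hD : Dense D)
    (hDs : ∀ (a : ℂ), ∀ ψ ∈ D, a • ψ ∈ D) (hF' : ∀ (a : ℂ) ψ, F' (a • ψ) = a • F' ψ)
    (hadj : ∀ z ∈ D, ∀ y ∈ D, ⟪F z, y⟫ = ⟪z, F' y⟫) {M : ℝ} (hM : ∀ y ∈ D, ‖F' y‖ ≤ M * ‖y‖) :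
    opNormOn D F ≤ opNormOn D F' :=
  opNormOn_le_of_norm_le (opNormOn_nonneg _ _) fun z hz =>
    norm_le_of_inner_eq_inner hD (opNormOn_nonneg _ _) (hadj z hz)
      fun _ hy => norm_le_opNormOn_mul hDs hF' hM hy

end opNormOn

namespace Op

def graphNorm (T : Op 𝓗) (N : ℕ) (ψ : 𝓗) : ℝ := ∑ n ∈ Finset.range (N + 1), ‖T.pw n ψ‖

lemma graphNorm_nonneg (T : Op 𝓗) (N : ℕ) (ψ : 𝓗) : 0 ≤ T.graphNorm N ψ :=
  Finset.sum_nonneg fun _ _ => norm_nonneg _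

def graphSubmodule (T : Op 𝓗) : Submodule ℂ (ℕ → 𝓗) :=
  T.dinfSubmodule.map (LinearMap.pi fun n => T.op ^ n)

variable {T : Op 𝓗}

lemma mem_graphSubmodule_iff {u : ℕ → 𝓗} :
    u ∈ T.graphSubmodule ↔ u 0 ∈ T.Dinf ∧ ∀ n, T.pw n (u 0) = u n := by
  rw [graphSubmodule, Submodule.mem_map]
  constructor
  · rintro ⟨ψ, hψ, rfl⟩
    rw [← SetLike.mem_coe, coe_dinfSubmodule] at hψ
    simpa [← pw_eq_pow_apply] using hψ
  · rintro ⟨h0, hu⟩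
    refine ⟨u 0, by rwa [← SetLike.mem_coe, coe_dinfSubmodule], funext fun n => ?_⟩
    simp only [LinearMap.pi_apply, ← pw_eq_pow_apply, hu]

lemma IsSelfAdjoint.isClosed_graphSubmodule (hT : T.IsSelfAdjoint) :
    IsClosed (T.graphSubmodule : Set (ℕ → 𝓗)) := by
  refine IsSeqClosed.isClosed fun u p hu hlim => ?_
  simp only [SetLike.mem_coe, mem_graphSubmodule_iff] at hu ⊢
  refine hT.mem_Dinf_of_tendsto (fun m => (hu m).1) fun n => ?_
  have e : (fun m => T.pw n (u m 0)) = fun m => u m n := funext fun m => (hu m).2 n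
  exact e ▸ ((continuous_apply n).tendsto p).comp hlim

lemma IsSelfAdjoint.exists_norm_le_graphNorm [CompleteSpace 𝓗] (hT : T.IsSelfAdjoint)
    (hdense : Dense T.Dinf) (A G : 𝓗 →ₗ[ℂ] 𝓗)
    (hAG : ∀ x ∈ T.Dinf, ∀ y ∈ T.Dinf, ⟪A x, y⟫ = ⟪x, G y⟫) :
    ∃ N C, 0 < C ∧ ∀ ψ ∈ T.Dinf, ‖A ψ‖ ≤ C * T.graphNorm N ψ := by
  set S := T.graphSubmodule
  have : TopologicalSpace.IsCompletelyPseudoMetrizableSpace S :=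
    hT.isClosed_graphSubmodule.isCompletelyPseudoMetrizableSpace
  let ι := {y : 𝓗 // y ∈ T.Dinf ∧ ‖y‖ ≤ 1}
  let ℓ : ι → S →L[ℂ] ℂ := fun y =>
    (innerSL ℂ (G y)).comp ((ContinuousLinearMap.proj 0).comp S.subtypeL)
  let p : ι → Seminorm ℂ S := fun y => (normSeminorm ℂ ℂ).comp (ℓ y).toLinearMap
  have hp : ∀ y u, p y u = ‖⟪A (u.1 0), y.1⟫‖ := fun y u => by
    change ‖⟪G y.1, u.1 0⟫‖ = _
    rw [norm_inner_symm, hAG _ (mem_graphSubmodule_iff.1 u.2).1 _ y.2.1]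
  have hbdd : BddAbove (Set.range p) := Seminorm.bddAbove_range_iff.2 fun u =>
    ⟨‖A (u.1 0)‖, by
      rintro _ ⟨y, rfl⟩
      exact (hp y u).trans_le ((norm_inner_le_norm _ _).trans (mul_le_of_le_one_right
        (norm_nonneg _) y.2.2))⟩
  -- `⨆ y, p y` is `u ↦ ‖A (u 0)‖`; it is continuous because `S` is barrelled.
  have hcont : Continuous ⇑(⨆ y, p y) := by
    rw [Seminorm.coe_iSup_eq hbdd]
    exact Seminorm.continuous_iSup p (fun y => continuous_norm.comp (ℓ y).continuous) hbdd
  have hS := Topology.IsInducing.withSeminorms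
    (withSeminorms_pi fun _ : ℕ => norm_withSeminorms ℂ 𝓗) (f := S.subtype)
    Topology.IsInducing.subtypeVal
  obtain ⟨s, C, hC, hle⟩ := Seminorm.bound_of_continuous hS _ hcont
  refine ⟨s.sup Sigma.fst, C, NNReal.coe_pos.2 (pos_iff_ne_zero.2 hC), fun ψ hψ => ?_⟩
  set u : S := ⟨fun n => T.pw n ψ, mem_graphSubmodule_iff.2 ⟨hψ, fun _ => rfl⟩⟩
  refine norm_le_of_dense_inner_le_of_norm_le_one hdense (fun a y hy => smul_mem_Dinf a hy)
    (mul_nonneg C.2 (graphNorm_nonneg _ _ _)) fun y hy hy1 => ?_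
  calc ‖⟪A ψ, y⟫‖ = p ⟨y, hy, hy1⟩ u := (hp ⟨y, hy, hy1⟩ u).symm
    _ ≤ (⨆ y, p y) u := le_ciSup hbdd (⟨y, hy, hy1⟩ : ι) u
    _ ≤ C * T.graphNorm (s.sup Sigma.fst) ψ := (hle u).trans <| mul_le_mul_of_nonneg_left
      (Seminorm.finset_sup_apply_le (graphNorm_nonneg _ _ _) fun i hi =>
        Finset.single_le_sum (f := fun n => ‖T.pw n ψ‖) (fun _ _ => norm_nonneg _)
          (Finset.mem_range_succ_iff.2 (Finset.le_sup (f := Sigma.fst) hi))) C.2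

end Op

def IsAdjointPairOn (D : Set 𝓗) (A Ad : 𝓗 →ₗ[ℂ] 𝓗) : Prop :=
  (∀ x ∈ D, A x ∈ D) ∧ (∀ x ∈ D, Ad x ∈ D) ∧ ∀ x ∈ D, ∀ y ∈ D, ⟪A x, y⟫ = ⟪x, Ad y⟫

namespace IsAdjointPairOn

variable {D : Set 𝓗} {A Ad : 𝓗 →ₗ[ℂ] 𝓗}

lemma symm (h : IsAdjointPairOn D A Ad) : IsAdjointPairOn D Ad A :=
  ⟨h.2.1, h.1, fun x hx y hy => by rw [← inner_conj_symm, ← h.2.2 y hy x hx, inner_conj_symm]⟩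

lemma memLdag (h : IsAdjointPairOn D A Ad) : MemLdag D A := ⟨h.1, Ad, h.2.1, h.2.2⟩

lemma inner_Φ_apply_pw {T : Op 𝓗} (h : IsAdjointPairOn T.Dinf A Ad) (hT : T.Symmetric)
    (c : FnCalc T 0) {f : ℝ → ℝ} (hf : RapidDecay f) (k : ℕ) {ψ : 𝓗} (hψ : ψ ∈ T.Dinf)
    (z : 𝓗) : ⟪c.Φ f (A (T.pw k ψ)), z⟫ = ⟪ψ, T.pw k (Ad (c.Φ f z))⟫ := by
  have hfz := c.Φ_mem_Dinf hf z
  rw [c.Φ_symm, h.2.2 _ (Op.pw_mem_Dinf hψ k) _ hfz, hT.inner_pw hψ (h.2.1 _ hfz)]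

lemma opNormOn_Φ_apply_pw_eq {T : Op 𝓗} (h : IsAdjointPairOn T.Dinf A Ad) (hT : T.Symmetric)
    (c : FnCalc T 0) {f : ℝ → ℝ} (hf : RapidDecay f) (k : ℕ)
    (hbdd : ∃ M, 0 ≤ M ∧ ∀ z ∈ T.Dinf, ‖T.pw k (Ad (c.Φ f z))‖ ≤ M * ‖z‖) :
    (opNormOn T.Dinf fun ψ => c.Φ f (A (T.pw k ψ))) =
      opNormOn T.Dinf fun z => T.pw k (Ad (c.Φ f z)) := by
  obtain ⟨M, hM0, hM⟩ := hbdd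
  have hsmul : ∀ (a : ℂ), ∀ ψ ∈ T.Dinf, a • ψ ∈ T.Dinf := fun a _ => Op.smul_mem_Dinf a
  have hadj := fun ψ (hψ : ψ ∈ T.Dinf) z => h.inner_Φ_apply_pw hT c hf k hψ z
  refine le_antisymm ?_ ?_
  · exact opNormOn_le_opNormOn_of_inner_eq c.dense_Dinf hsmul
      (fun a z => by rw [map_smul, map_smul, Op.pw_smul]) (fun ψ hψ z _ => hadj ψ hψ z) hM
  · exact opNormOn_le_opNormOn_of_inner_eq c.dense_Dinf hsmul
      (fun a ψ => by rw [Op.pw_smul, map_smul, map_smul])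
      (fun z _ ψ hψ => by rw [← inner_conj_symm, ← hadj ψ hψ z, inner_conj_symm]) (M := M)
      fun ψ hψ => norm_le_of_inner_eq_inner c.dense_Dinf hM0 (fun z _ => hadj ψ hψ z) hM

end IsAdjointPairOn

lemma MemLdag.exists_isAdjointPairOn {D : Set 𝓗} {A : 𝓗 →ₗ[ℂ] 𝓗} (h : MemLdag D A) :
    ∃ Ad, IsAdjointPairOn D A Ad :=
  let ⟨hA, Ad, hAd, hAAd⟩ := h
  ⟨Ad, hA, hAd, hAAd⟩

lemma FnCalc.exists_norm_apply_Φ_le {T : Op 𝓗} (c : FnCalc T 0) {f : ℝ → ℝ}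
    (hf : RapidDecay f) {F : 𝓗 → 𝓗}
    (hF : ∃ N C, 0 < C ∧ ∀ ψ ∈ T.Dinf, ‖F ψ‖ ≤ C * T.graphNorm N ψ) :
    ∃ M, 0 ≤ M ∧ ∀ x, ‖F (c.Φ f x)‖ ≤ M * ‖x‖ := by
  obtain ⟨N, C, hC, hF⟩ := hF
  choose M hM0 hM using c.exists_norm_pw_Φ_le hf
  refine ⟨C * ∑ n ∈ Finset.range (N + 1), M n,
    mul_nonneg hC.le (Finset.sum_nonneg fun n _ => hM0 n), fun x => ?_⟩
  calc ‖F (c.Φ f x)‖ ≤ C * ∑ n ∈ Finset.range (N + 1), ‖T.pw n (c.Φ f x)‖ :=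
        hF _ (c.Φ_mem_Dinf hf x)
    _ ≤ C * ∑ n ∈ Finset.range (N + 1), M n * ‖x‖ := by gcongr with n; exact hM n x
    _ = _ := by rw [← Finset.sum_mul, mul_assoc]

namespace Op

variable [CompleteSpace 𝓗] {T : Op 𝓗}

lemma Symmetric.exists_norm_pw_le_graphNorm {S : Op 𝓗} (hS : S.Symmetric)
    (hT : T.IsSelfAdjoint) (hdense : Dense T.Dinf) (hD : S.Dinf = T.Dinf) (k : ℕ) :
    ∃ N C, 0 < C ∧ ∀ ψ ∈ T.Dinf, ‖S.pw k ψ‖ ≤ C * T.graphNorm N ψ := by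
  simp only [pw_eq_pow_apply S k]
  refine hT.exists_norm_le_graphNorm hdense _ (S.op ^ k) fun x hx y hy => ?_
  rw [← pw_eq_pow_apply, ← pw_eq_pow_apply]
  exact hS.inner_pw (hD ▸ hx) (hD ▸ hy) k

lemma IsSelfAdjoint.exists_norm_pw_apply_le_graphNorm (hT : T.IsSelfAdjoint)
    (hdense : Dense T.Dinf) {B : 𝓗 →ₗ[ℂ] 𝓗} (hB : MemLdag T.Dinf B) (m : ℕ) :
    ∃ N C, 0 < C ∧ ∀ ψ ∈ T.Dinf, ‖T.pw m (B ψ)‖ ≤ C * T.graphNorm N ψ := by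
  obtain ⟨hBD, Bd, -, hBBd⟩ := hB
  simp only [pw_eq_pow_apply T m, ← LinearMap.comp_apply]
  refine hT.exists_norm_le_graphNorm hdense _ (Bd.comp (T.op ^ m)) fun x hx y hy => ?_
  simp only [LinearMap.comp_apply, ← pw_eq_pow_apply]
  rw [hT.2.1.inner_pw (hBD x hx) hy, hBBd x hx _ (pw_mem_Dinf hy m)]

lemma IsSelfAdjoint.exists_norm_pw_apply_Φ_le (hT : T.IsSelfAdjoint) (c : FnCalc T 0)
    {B : 𝓗 →ₗ[ℂ] 𝓗} (hB : MemLdag T.Dinf B) {g : ℝ → ℝ} (hg : RapidDecay g) (m : ℕ) :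
    ∃ M, 0 ≤ M ∧ ∀ z, ‖T.pw m (B (c.Φ g z))‖ ≤ M * ‖z‖ :=
  c.exists_norm_apply_Φ_le hg (hT.exists_norm_pw_apply_le_graphNorm c.dense_Dinf hB m)

end Op

section Interpolation

noncomputable def linInterp (d : ℕ → ℝ) (t : ℝ) : ℝ :=
  d 0 - ∑' K : ℕ, (d K - d (K + 1)) * max 0 (min 1 (t - K))

variable {d : ℕ → ℝ}

lemma linInterp_natCast (d : ℕ → ℝ) (K : ℕ) : linInterp d K = d K := by
  have hsum : ∑' J : ℕ, (d J - d (J + 1)) * max 0 (min 1 ((K : ℝ) - J)) =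
      ∑ J ∈ Finset.range K, (d J - d (J + 1)) := by
    rw [tsum_eq_sum (s := Finset.range K) fun J hJ => ?_]
    · refine Finset.sum_congr rfl fun J hJ => ?_
      have : (J : ℝ) + 1 ≤ K := by exact_mod_cast Finset.mem_range.1 hJ
      rw [min_eq_left (by linarith), max_eq_right zero_le_one, mul_one]
    · have : (K : ℝ) ≤ J := by exact_mod_cast not_lt.1 (Finset.mem_range.not.1 hJ)
      rw [min_eq_right (by linarith), max_eq_left (by linarith), mul_zero]
  rw [linInterp, hsum, Finset.sum_range_sub' d, sub_sub_cancel]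

lemma clamp_mem_Icc (s : ℝ) : max 0 (min 1 s) ∈ Set.Icc (0 : ℝ) 1 :=
  ⟨le_max_left _ _, max_le zero_le_one (min_le_left _ _)⟩

lemma summable_sub_succ_of_antitone (hd : Antitone d) (h0 : ∀ K, 0 ≤ d K) :
    Summable fun K => d K - d (K + 1) :=
  summable_of_sum_range_le (fun K => sub_nonneg.2 (hd K.le_succ)) fun n => by
    rw [Finset.sum_range_sub' d]
    linarith [h0 n]

lemma linInterp_term_le (hd : Antitone d) (K : ℕ) (t : ℝ) :
    ‖(d K - d (K + 1)) * max 0 (min 1 (t - K))‖ ≤ d K - d (K + 1) := by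
  have h := clamp_mem_Icc (t - K)
  rw [norm_mul, Real.norm_of_nonneg (sub_nonneg.2 (hd K.le_succ)), Real.norm_of_nonneg h.1]
  exact mul_le_of_le_one_right (sub_nonneg.2 (hd K.le_succ)) h.2

lemma continuous_linInterp (hd : Antitone d) (h0 : ∀ K, 0 ≤ d K) : Continuous (linInterp d) :=
  continuous_const.sub <| continuous_tsum (fun K => by fun_prop)
    (summable_sub_succ_of_antitone hd h0) (linInterp_term_le hd)

lemma antitone_linInterp (hd : Antitone d) (h0 : ∀ K, 0 ≤ d K) : Antitone (linInterp d) := by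
  intro s t hst
  have hs := summable_sub_succ_of_antitone hd h0
  refine sub_le_sub_left (Summable.tsum_le_tsum (fun K => ?_) ?_ ?_) _
  · exact mul_le_mul_of_nonneg_left (by gcongr) (sub_nonneg.2 (hd K.le_succ))
  · exact Summable.of_norm_bounded hs (linInterp_term_le hd · s)
  · exact Summable.of_norm_bounded hs (linInterp_term_le hd · t)

end Interpolation

section SlowIndex

noncomputable def slowIndex (c : ℕ → ℝ) : ℕ → ℕ
  | 0 => 0
  | K + 1 => if c (slowIndex c K + 1) ≤ K + 1 then slowIndex c K + 1 else slowIndex c K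

variable (c : ℕ → ℝ)

lemma slowIndex_succ_le (K : ℕ) : slowIndex c (K + 1) ≤ slowIndex c K + 1 := by
  rw [slowIndex]; split <;> omega

lemma monotone_slowIndex : Monotone (slowIndex c) :=
  monotone_nat_of_le_succ fun K => by rw [slowIndex]; split <;> omega

lemma apply_slowIndex_le (K : ℕ) : c (slowIndex c K) ≤ max (c 0) K := by
  induction K with
  | zero => exact le_max_left _ _
  | succ K ih =>
    rw [slowIndex]
    split_ifs with h
    · exact h.trans (by push_cast; exact le_max_right _ _)
    · exact ih.trans (max_le_max le_rfl (by exact_mod_cast K.le_succ))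

lemma tendsto_slowIndex : Tendsto (slowIndex c) atTop atTop := by
  refine tendsto_atTop.2 fun R => ?_
  induction R with
  | zero => exact Eventually.of_forall fun _ => Nat.zero_le _
  | succ R ih =>
    obtain ⟨N, hN⟩ := eventually_atTop.1 ih
    refine eventually_atTop.2 ⟨max N ⌈c (R + 1)⌉₊ + 1, fun K hK => ?_⟩
    obtain ⟨K, rfl⟩ : ∃ K', K = K' + 1 := ⟨K - 1, by omega⟩
    have hR : R ≤ slowIndex c K := hN K (by omega)
    rcases hR.eq_or_lt with hR | hR
    · have : c (slowIndex c K + 1) ≤ K + 1 := by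
        rw [← hR]
        refine (Nat.le_ceil _).trans ?_
        exact_mod_cast (le_max_right _ _).trans (Nat.le_of_lt_succ hK) |>.trans K.le_succ
      rw [slowIndex, if_pos this]
      omega
    · exact hR.trans_le (monotone_slowIndex c K.le_succ)

end SlowIndex

section DecayFn

variable (c : ℕ → ℝ)

noncomputable def nodeDecay (K : ℕ) : ℝ := (((K : ℝ) + 1) ^ slowIndex c K)⁻¹

noncomputable def decayFn : ℝ → ℝ := linInterp (nodeDecay c)

lemma nodeDecay_pos (K : ℕ) : 0 < nodeDecay c K := by unfold nodeDecay; positivity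

lemma nodeDecay_le_one (K : ℕ) : nodeDecay c K ≤ 1 :=
  inv_le_one_of_one_le₀ (one_le_pow₀ (by linarith [(K.cast_nonneg : (0 : ℝ) ≤ K)]))

lemma antitone_nodeDecay : Antitone (nodeDecay c) := fun K L hKL => by
  have hK : (0 : ℝ) ≤ K := K.cast_nonneg
  have hKL' : (K : ℝ) ≤ L := by exact_mod_cast hKL
  refine inv_anti₀ (by positivity) ?_
  calc ((K : ℝ) + 1) ^ slowIndex c K ≤ ((L : ℝ) + 1) ^ slowIndex c K := by gcongr
    _ ≤ ((L : ℝ) + 1) ^ slowIndex c L :=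
      pow_le_pow_right₀ (by linarith) (monotone_slowIndex c hKL)

lemma pow_mul_nodeDecay_le_one {n K : ℕ} (h : n ≤ slowIndex c K) :
    ((K : ℝ) + 1) ^ n * nodeDecay c K ≤ 1 := by
  have : (1 : ℝ) ≤ K + 1 := by linarith [(K.cast_nonneg : (0 : ℝ) ≤ K)]
  rw [nodeDecay, ← div_eq_mul_inv, div_le_one (by positivity)]
  exact pow_le_pow_right₀ this h

lemma decayFn_natCast (K : ℕ) : decayFn c K = nodeDecay c K := linInterp_natCast _ K

lemma continuous_decayFn : Continuous (decayFn c) :=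
  continuous_linInterp (antitone_nodeDecay c) fun K => (nodeDecay_pos c K).le

lemma antitone_decayFn : Antitone (decayFn c) :=
  antitone_linInterp (antitone_nodeDecay c) fun K => (nodeDecay_pos c K).le

lemma decayFn_pos (t : ℝ) : 0 < decayFn c t :=
  (nodeDecay_pos c ⌈t⌉₊).trans_le <| decayFn_natCast c _ ▸ antitone_decayFn c (Nat.le_ceil t)

lemma isInF_decayFn : IsInF (decayFn c) := by
  refine ⟨continuous_decayFn c, fun t _ => decayFn_pos c t, fun n => ?_⟩
  obtain ⟨N, hN⟩ := eventually_atTop.1 ((tendsto_slowIndex c).eventually_ge_atTop n)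
  refine ⟨((N : ℝ) + 1) ^ n, fun t ht => ?_⟩
  set K := ⌊t⌋₊
  have hone : (1 : ℝ) ≤ N + 1 := by linarith [(N.cast_nonneg : (0 : ℝ) ≤ N)]
  calc t ^ n * decayFn c t ≤ ((K : ℝ) + 1) ^ n * nodeDecay c K := by
        rw [← decayFn_natCast]
        exact mul_le_mul (pow_le_pow_left₀ ht (Nat.lt_floor_add_one t).le n)
          (antitone_decayFn c (Nat.floor_le ht)) (decayFn_pos c t).le (by positivity)
    _ ≤ ((N : ℝ) + 1) ^ n := by
      rcases le_or_gt N K with hK | hK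
      · exact (pow_mul_nodeDecay_le_one c (hN K hK)).trans (one_le_pow₀ hone)
      · refine (mul_le_of_le_one_right (by positivity) (nodeDecay_le_one c K)).trans ?_
        gcongr

noncomputable def errWeight (n K : ℕ) : ℝ :=
  ((K : ℝ) + 1) ^ n * ((K : ℝ) + 2) ^ (slowIndex c K + 1) / (K : ℝ) ^ (4 * slowIndex c K)

lemma pow_slowIndex_pos (K : ℕ) : 0 < (K : ℝ) ^ (4 * slowIndex c K) := by
  cases K with
  | zero => simp [slowIndex]
  | succ K => positivity

lemma errWeight_nonneg (n K : ℕ) : 0 ≤ errWeight c n K := by unfold errWeight; positivity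

lemma pow_div_decayFn_le (n K : ℕ) {t : ℝ} (ht : t ∈ Set.Ioc (K : ℝ) (K + 1)) :
    t ^ n / decayFn c t ≤ errWeight c n K * t ^ (4 * slowIndex c K) := by
  have hK : (0 : ℝ) ≤ K := K.cast_nonneg
  have hinv : (decayFn c t)⁻¹ ≤ ((K : ℝ) + 2) ^ (slowIndex c K + 1) := by
    have h := antitone_decayFn c ht.2
    rw [← Nat.cast_succ, decayFn_natCast, nodeDecay, Nat.cast_succ, add_assoc, one_add_one_eq_two]
      at h
    calc (decayFn c t)⁻¹ ≤ ((K : ℝ) + 2) ^ slowIndex c (K + 1) := by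
          rwa [inv_le_comm₀ (decayFn_pos c t) (by positivity)]
      _ ≤ _ := pow_le_pow_right₀ (by linarith) (slowIndex_succ_le c K)
  calc t ^ n / decayFn c t ≤ ((K : ℝ) + 1) ^ n * ((K : ℝ) + 2) ^ (slowIndex c K + 1) := by
        rw [div_eq_mul_inv]
        exact mul_le_mul (pow_le_pow_left₀ (by linarith [ht.1]) ht.2 n) hinv
          (inv_pos.2 (decayFn_pos c t)).le (by positivity)
    _ = errWeight c n K * (K : ℝ) ^ (4 * slowIndex c K) := by
        rw [errWeight, div_mul_cancel₀ _ (pow_slowIndex_pos c K).ne']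
    _ ≤ errWeight c n K * t ^ (4 * slowIndex c K) := by
        gcongr
        · exact errWeight_nonneg c n K
        · exact ht.1.le

lemma summable_errWeight_mul (n : ℕ) : Summable fun K => errWeight c n K * max (c 0) K := by
  refine Summable.of_norm_bounded_eventually_nat (Real.summable_nat_pow_inv.2 one_lt_two) ?_
  filter_upwards [(tendsto_slowIndex c).eventually_ge_atTop (n + 3),
    eventually_ge_atTop (max 2 ⌈c 0⌉₊)] with K hρ hK
  have hK2 : (2 : ℝ) ≤ K := by exact_mod_cast (le_max_left _ _).trans hK
  have hmax : max (c 0) K = K :=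
    max_eq_right ((Nat.le_ceil _).trans (by exact_mod_cast (le_max_right _ _).trans hK))
  have hsq : ∀ a ≤ 2, (K : ℝ) + a ≤ (K : ℝ) ^ 2 := fun a ha => by nlinarith
  rw [hmax, Real.norm_of_nonneg (mul_nonneg (errWeight_nonneg c n K) (by positivity)), errWeight,
    div_mul_eq_mul_div, div_le_iff₀ (pow_slowIndex_pos c K), ← div_eq_inv_mul,
    le_div_iff₀ (by positivity)]
  calc ((K : ℝ) + 1) ^ n * ((K : ℝ) + 2) ^ (slowIndex c K + 1) * K * K ^ 2
      ≤ ((K : ℝ) ^ 2) ^ n * ((K : ℝ) ^ 2) ^ (slowIndex c K + 1) * K * K ^ 2 := by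
        gcongr
        · exact hsq 1 one_le_two
        · exact hsq 2 le_rfl
    _ = (K : ℝ) ^ (2 * n + 2 * slowIndex c K + 5) := by ring
    _ ≤ (K : ℝ) ^ (4 * slowIndex c K) := pow_le_pow_right₀ (by linarith) (by omega)

end DecayFn

noncomputable def invCutoff (g : ℝ → ℝ) (L : ℝ) : ℝ → ℝ :=
  Set.indicator (Set.Icc 0 L) fun t => (g t)⁻¹

section invCutoff

variable {g : ℝ → ℝ}

lemma mul_invCutoff (hg : ∀ t, g t ≠ 0) (L : ℝ) :
    (fun t => g t * invCutoff g L t) = Set.indicator (Set.Icc 0 L) fun _ => 1 := by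
  ext t
  by_cases h : t ∈ Set.Icc 0 L <;> simp [invCutoff, h, hg t]

lemma invCutoff_succ_sub (K : ℕ) (t : ℝ) :
    invCutoff g (K + 1) t - invCutoff g K t =
      Set.indicator (Set.Ioc (K : ℝ) (K + 1)) (fun t => (g t)⁻¹) t := by
  have hK : (0 : ℝ) ≤ K := K.cast_nonneg
  simp only [invCutoff, Set.indicator_apply, Set.mem_Icc, Set.mem_Ioc]
  split_ifs <;> grind

end invCutoff

lemma FnCalc.norm_pw_Φ_invCutoff_succ_sub_le {T : Op 𝓗} (c : FnCalc T 0) (hT : T.Symmetric)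
    {g : ℝ → ℝ} (hg : Continuous g) (hgpos : ∀ t, 0 < g t) {x : 𝓗} (hx : x ∈ T.Dinf)
    (n K r : ℕ) {M : ℝ} (hM0 : 0 ≤ M)
    (hM : ∀ t ∈ Set.Ioc (K : ℝ) (K + 1), t ^ n / g t ≤ M * t ^ r) :
    ‖T.pw n (c.Φ (invCutoff g (K + 1)) x) - T.pw n (c.Φ (invCutoff g K) x)‖ ≤
      M * ‖T.pw r x‖ := by
  have hginv : Continuous fun t => (g t)⁻¹ := hg.inv₀ fun t => (hgpos t).ne'
  have hv : ∀ L : ℝ, RapidDecay (invCutoff g L) := rapidDecay_indicator_Icc hginv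
  have hm : ∀ L : ℝ, Measurable fun t => t ^ n * invCutoff g L t := fun L =>
    (measurable_id.pow_const n).mul (hv L).1
  rw [c.pw_Φ (hv _), c.pw_Φ (hv _), ← c.Φ_sub (hm _) (hm _)]
  simp only [← mul_sub, invCutoff_succ_sub]
  refine c.norm_Φ_le_mul_norm_pw hT
    (u := fun t => t ^ n * Set.indicator (Set.Ioc (K : ℝ) (K + 1)) (fun t => (g t)⁻¹) t)
    ((measurable_id.pow_const n).mul (hginv.measurable.indicator measurableSet_Ioc))
    (L := K + 1) (fun t ht => ?_) (fun t ht => ?_) hx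
  · rw [Set.indicator_of_notMem fun h => (not_le.2 ht) h.2, mul_zero]
  · by_cases h : t ∈ Set.Ioc (K : ℝ) (K + 1)
    · rw [Set.indicator_of_mem h, abs_of_nonneg (by have := hgpos t; positivity), ← div_eq_mul_inv]
      exact hM t h
    · rw [Set.indicator_of_notMem h, mul_zero, abs_zero]
      positivity

lemma FnCalc.Φ_Φ_invCutoff {T : Op 𝓗} (c : FnCalc T 0) {g : ℝ → ℝ} (hg : Continuous g)
    (hgpos : ∀ t, 0 < g t) (L : ℝ) (x : 𝓗) :
    c.Φ g (c.Φ (invCutoff g L) x) = c.Φ (Set.indicator (Set.Icc 0 L) fun _ => 1) x := by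
  rw [← mul_invCutoff (fun t => (hgpos t).ne'), c.Φ_mul g (invCutoff g L) hg.measurable
    (rapidDecay_indicator_Icc (hg.inv₀ fun t => (hgpos t).ne') L).1]
  rfl

lemma FnCalc.norm_Φ_invCutoff_zero_le {T : Op 𝓗} (c : FnCalc T 0) {g : ℝ → ℝ}
    (hgpos : ∀ t, 0 < g t) (x : 𝓗) : ‖c.Φ (invCutoff g 0) x‖ ≤ (g 0)⁻¹ * ‖x‖ := by
  refine c.Φ_norm _ _ (fun t _ => ?_) x
  by_cases h : t ∈ Set.Icc (0 : ℝ) 0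
  · rw [invCutoff, Set.indicator_of_mem h, le_antisymm h.2 h.1,
      abs_of_pos (inv_pos.2 (hgpos 0))]
  · rw [invCutoff, Set.indicator_of_notMem h, abs_zero]
    exact (inv_pos.2 (hgpos 0)).le

lemma Op.IsSelfAdjoint.exists_tendsto_mem_Dinf [CompleteSpace 𝓗] {T : Op 𝓗}
    (hT : T.IsSelfAdjoint) {χ : ℕ → 𝓗} (hχ : ∀ K, χ K ∈ T.Dinf) {e : ℕ → ℕ → ℝ}
    (he : ∀ n, Summable (e n)) (hstep : ∀ n K, dist (T.pw n (χ K)) (T.pw n (χ (K + 1))) ≤ e n K) :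
    ∃ y ∈ T.Dinf, Tendsto χ atTop (𝓝 y) ∧ dist (χ 0) y ≤ ∑' K, e 0 K := by
  have hlim : ∀ n, ∃ y, Tendsto (fun K => T.pw n (χ K)) atTop (𝓝 y) := fun n =>
    cauchySeq_tendsto_of_complete (cauchySeq_of_dist_le_of_summable _ (hstep n) (he n))
  choose y hy using hlim
  have hy0 : Tendsto χ atTop (𝓝 (y 0)) := by simpa only [Op.pw_zero] using hy 0
  exact ⟨y 0, (hT.mem_Dinf_of_tendsto hχ hy).1, hy0,
    dist_le_tsum_of_dist_le_of_tendsto₀ _ (by simpa only [Op.pw_zero] using hstep 0) (he 0) hy0⟩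

theorem Op.IsSelfAdjoint.exists_isInF_Φ_eq [CompleteSpace 𝓗] {T : Op 𝓗} (hT : T.IsSelfAdjoint)
    (c : FnCalc T 0) (b : ℕ → ℝ) :
    ∃ g, IsInF g ∧ ∃ K, 0 < K ∧ ∀ ν, 0 ≤ ν → ∀ x ∈ T.Dinf, (∀ r, ‖T.pw r x‖ ≤ b r * ν) →
      ∃ χ ∈ T.Dinf, c.Φ g χ = x ∧ ‖χ‖ ≤ K * ν := by
  -- With `ρ = slowIndex a`: on `[K, K + 1]` the factor `g⁻¹ ≤ (K + 2) ^ (ρ K + 1)` is absorbed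
  -- by `T ^ (4 ρ K)`, and `‖T ^ (4 ρ K) x‖ ≤ max (b 0) K * ν`.
  set a : ℕ → ℝ := fun r => b (4 * r)
  set g := decayFn a
  set e : ℕ → ℕ → ℝ := fun n K => errWeight a n K * max (b 0) K
  have hg := isInF_decayFn a
  have he0 : 0 ≤ ∑' K, e 0 K :=
    tsum_nonneg fun K => mul_nonneg (errWeight_nonneg a 0 K) (le_max_of_le_right K.cast_nonneg)
  refine ⟨g, hg, max (b 0) 0 + ∑' K, e 0 K + 1, by positivity, fun ν hν x hx hxb => ?_⟩
  set χ : ℕ → 𝓗 := fun K => c.Φ (invCutoff g K) x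
  have hstep : ∀ n K, dist (T.pw n (χ K)) (T.pw n (χ (K + 1))) ≤ e n K * ν := fun n K => by
    rw [dist_comm, dist_eq_norm, mul_assoc]
    simp only [χ, Nat.cast_succ]
    refine (c.norm_pw_Φ_invCutoff_succ_sub_le hT.2.1 hg.1 (decayFn_pos a) hx n K _
      (errWeight_nonneg a n K) fun t ht => pow_div_decayFn_le a n K ht).trans ?_
    gcongr
    · exact errWeight_nonneg a n K
    · exact (hxb _).trans (mul_le_mul_of_nonneg_right (apply_slowIndex_le a K) hν)
  have hv : ∀ L, RapidDecay (invCutoff g L) :=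
    rapidDecay_indicator_Icc (hg.1.inv₀ fun t => (decayFn_pos a t).ne')
  obtain ⟨y, hyD, hy, hdist⟩ := hT.exists_tendsto_mem_Dinf (χ := χ)
    (fun K => c.Φ_mem_Dinf (hv K) x) (fun n => (summable_errWeight_mul a n).mul_right ν) hstep
  refine ⟨y, hyD, tendsto_nhds_unique (((c.Φ g).continuous.tendsto _).comp hy) ?_, ?_⟩
  · have hQ : ∀ K : ℕ, c.Φ g (χ K) = c.Φ (Set.indicator (Set.Icc 0 (K : ℝ)) fun _ => 1) x :=
      fun K => c.Φ_Φ_invCutoff hg.1 (decayFn_pos a) K x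
    simpa only [Function.comp_def, hQ] using (c.Q_tendsto x).comp tendsto_natCast_atTop_atTop
  · have hg0 : g 0 = 1 := by simpa [nodeDecay, slowIndex] using decayFn_natCast a 0
    have hχ0 : ‖χ 0‖ ≤ max (b 0) 0 * ν :=
      calc ‖χ 0‖ ≤ (g 0)⁻¹ * ‖x‖ := by
            simpa only [χ, Nat.cast_zero] using c.norm_Φ_invCutoff_zero_le (decayFn_pos a) x
        _ ≤ max (b 0) 0 * ν := by
            simpa [hg0] using (hxb 0).trans (mul_le_mul_of_nonneg_right (le_max_left _ _) hν)
    calc ‖y‖ ≤ ‖χ 0‖ + dist (χ 0) y := by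
          rw [dist_comm, dist_eq_norm]; exact norm_le_norm_add_norm_sub' _ _
      _ ≤ max (b 0) 0 * ν + (∑' K, e 0 K) * ν := add_le_add hχ0 (hdist.trans_eq tsum_mul_right)
      _ ≤ _ := by nlinarith

section Comparison

variable [CompleteSpace 𝓗] {S T : Op 𝓗}

lemma norm_pw_apply_Φ_le_sum_opNormOn (hT : T.IsSelfAdjoint) (cT : FnCalc T 0) {k N : ℕ} {C : ℝ}
    (hC : 0 ≤ C) (hkey : ∀ ψ ∈ T.Dinf, ‖S.pw k ψ‖ ≤ C * T.graphNorm N ψ) {B : 𝓗 →ₗ[ℂ] 𝓗}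
    (hB : MemLdag T.Dinf B) {g : ℝ → ℝ} (hg : RapidDecay g) {χ : 𝓗} (hχ : χ ∈ T.Dinf) :
    ‖S.pw k (B (cT.Φ g χ))‖ ≤
      C * (∑ m ∈ Finset.range (N + 1), opNormOn T.Dinf fun z => T.pw m (B (cT.Φ g z))) * ‖χ‖ := by
  calc ‖S.pw k (B (cT.Φ g χ))‖
      ≤ C * ∑ m ∈ Finset.range (N + 1), ‖T.pw m (B (cT.Φ g χ))‖ :=
        hkey _ (hB.1 _ (cT.Φ_mem_Dinf hg χ))
    _ ≤ C * ∑ m ∈ Finset.range (N + 1),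
          (opNormOn T.Dinf fun z => T.pw m (B (cT.Φ g z))) * ‖χ‖ := by
        gcongr with m
        obtain ⟨M, -, hM⟩ := hT.exists_norm_pw_apply_Φ_le cT hB hg m
        exact norm_le_opNormOn_mul (fun a _ h => Op.smul_mem_Dinf a h)
          (fun a z => by rw [map_smul, map_smul, Op.pw_smul]) (fun z _ => hM z) hχ
    _ = _ := by rw [← Finset.sum_mul, mul_assoc]

lemma exists_isInF_Φ_eq_Φ (hS : S.IsSelfAdjoint) (hT : T.IsSelfAdjoint) (cS : FnCalc S 0)
    (cT : FnCalc T 0) (hD : S.Dinf = T.Dinf) {f : ℝ → ℝ} (hf : RapidDecay f) :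
    ∃ g, IsInF g ∧ ∃ K, 0 < K ∧ ∀ φ, ∃ χ ∈ T.Dinf, cT.Φ g χ = cS.Φ f φ ∧ ‖χ‖ ≤ K * ‖φ‖ := by
  have hprofile : ∀ r, ∃ b, 0 ≤ b ∧ ∀ φ, ‖T.pw r (cS.Φ f φ)‖ ≤ b * ‖φ‖ := fun r =>
    cS.exists_norm_apply_Φ_le hf (hT.2.1.exists_norm_pw_le_graphNorm hS cS.dense_Dinf hD.symm r)
  choose b _ hb using hprofile
  obtain ⟨g, hg, K, hK, hfac⟩ := hT.exists_isInF_Φ_eq cT b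
  exact ⟨g, hg, K, hK, fun φ =>
    hfac ‖φ‖ (norm_nonneg φ) _ (hD ▸ cS.Φ_mem_Dinf hf φ) fun r => hb r φ⟩

theorem exists_qseminorm_le_sum (hS : S.IsSelfAdjoint) (hT : T.IsSelfAdjoint) (cS : FnCalc S 0)
    (cT : FnCalc T 0) (D : Set 𝓗) (hDS : D = S.Dinf) (hDT : D = T.Dinf) {f : ℝ → ℝ}
    (hf : IsInF f) (k : ℕ) :
    ∃ C : ℝ, 0 < C ∧ ∃ n : ℕ, ∃ g : Fin n → ℝ → ℝ, ∃ j : Fin n → ℕ, (∀ i, IsInF (g i)) ∧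
      ∀ A : 𝓗 →ₗ[ℂ] 𝓗, MemLdag D A →
        qseminorm cS D f k A ≤ C * ∑ i, qseminorm cT D (g i) (j i) A := by
  subst hDT
  obtain ⟨g, hg, K, hK, hfac⟩ := exists_isInF_Φ_eq_Φ hS hT cS cT hDS.symm hf.rapidDecay
  obtain ⟨N, C, hC, hkey⟩ := hS.2.1.exists_norm_pw_le_graphNorm hT cT.dense_Dinf hDS.symm k
  set σ : (𝓗 →ₗ[ℂ] 𝓗) → ℝ := fun B =>
    ∑ m ∈ Finset.range (N + 1), opNormOn T.Dinf fun z => T.pw m (B (cT.Φ g z))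
  have hσ : ∀ B, 0 ≤ σ B := fun B => Finset.sum_nonneg fun _ _ => opNormOn_nonneg _ _
  have hchain : ∀ B, MemLdag T.Dinf B → ∀ φ,
      ‖S.pw k (B (cS.Φ f φ))‖ ≤ C * K * σ B * ‖φ‖ := by
    intro B hB φ
    obtain ⟨χ, hχ, hχeq, hχn⟩ := hfac φ
    rw [← hχeq]
    calc _ ≤ C * σ B * ‖χ‖ := norm_pw_apply_Φ_le_sum_opNormOn hT cT hC.le hkey hB hg.rapidDecay hχ
      _ ≤ C * σ B * (K * ‖φ‖) := mul_le_mul_of_nonneg_left hχn (mul_nonneg hC.le (hσ B))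
      _ = C * K * σ B * ‖φ‖ := by ring
  refine ⟨C * K, by positivity, N + 1, fun _ => g, fun i => i, fun _ => hg, fun A hA => ?_⟩
  obtain ⟨Ad, hAAd⟩ := hA.exists_isAdjointPairOn
  have hAd := hAAd.symm.memLdag
  rw [qseminorm, Fin.sum_univ_eq_sum_range (fun m => qseminorm cT T.Dinf g m A)]
  refine max_le ?_ ?_
  · calc (opNormOn T.Dinf fun φ => S.pw k (A (cS.Φ f φ))) ≤ C * K * σ A :=
          opNormOn_le_of_norm_le (by positivity [hσ A]) fun φ _ => hchain A hA φ
      _ ≤ _ := by simp only [σ]; gcongr with m; exact le_max_left _ _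
  · calc (opNormOn T.Dinf fun φ => cS.Φ f (A (S.pw k φ)))
          = opNormOn T.Dinf fun φ => S.pw k (Ad (cS.Φ f φ)) := by
            rw [hDS]
            exact (hDS ▸ hAAd).opNormOn_Φ_apply_pw_eq hS.2.1 cS hf.rapidDecay k
              ⟨_, by positivity [hσ Ad], fun φ _ => hchain Ad hAd φ⟩
      _ ≤ C * K * σ Ad := opNormOn_le_of_norm_le (by positivity [hσ Ad]) fun φ _ => hchain Ad hAd φ
      _ ≤ _ := by
        simp only [σ]
        gcongr with m
        obtain ⟨M, hM0, hM⟩ := hT.exists_norm_pw_apply_Φ_le cT hAd hg.rapidDecay m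
        rw [← hAAd.opNormOn_Φ_apply_pw_eq hT.2.1 cT hg.rapidDecay m ⟨M, hM0, fun z _ => hM z⟩]
        exact le_max_right _ _

end Comparison

variable {𝓗 : Type*} [NormedAddCommGroup 𝓗] [InnerProductSpace ℂ 𝓗] [CompleteSpace 𝓗]

/-- Equivalence of the two topologies is expressed by mutual domination: every seminorm of one
family is bounded by a constant times a finite sum of seminorms of the other family. -/
theorem stmt3_general (H0 B : Op 𝓗) (hsa0 : H0.IsSelfAdjoint)
    (hsaH : (H0.pert B).IsSelfAdjoint)
    (S0 : FnCalc H0 0) (SH : FnCalc (H0.pert B) 0)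
    (D : Set 𝓗) (hD0 : D = H0.Dinf) (hDH : D = (H0.pert B).Dinf) :
    (∀ f : ℝ → ℝ, IsInF f → ∀ k : ℕ, ∃ C : ℝ, 0 < C ∧ ∃ n : ℕ, ∃ g : Fin n → ℝ → ℝ,
      ∃ j : Fin n → ℕ, (∀ i, IsInF (g i)) ∧ ∀ A : 𝓗 →ₗ[ℂ] 𝓗, MemLdag D A →
        qseminorm S0 D f k A ≤ C * ∑ i, qseminorm SH D (g i) (j i) A) ∧
    (∀ f : ℝ → ℝ, IsInF f → ∀ k : ℕ, ∃ C : ℝ, 0 < C ∧ ∃ n : ℕ, ∃ g : Fin n → ℝ → ℝ,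
      ∃ j : Fin n → ℕ, (∀ i, IsInF (g i)) ∧ ∀ A : 𝓗 →ₗ[ℂ] 𝓗, MemLdag D A →
        qseminorm SH D f k A ≤ C * ∑ i, qseminorm S0 D (g i) (j i) A) :=
  ⟨fun _ hf k => exists_qseminorm_le_sum hsa0 hsaH S0 SH D hD0 hDH hf k,
   fun _ hf k => exists_qseminorm_le_sum hsaH hsa0 SH S0 D hDH hD0 hf k⟩

/-- Under the assumptions `H = H0 + B` self-adjoint on `D(H0)` and
`D = D^∞(H0) = D^∞(H)`, the locally convex topologies on `L†(D)` defined by the two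
families of seminorms `A ↦ max{‖H0^k A f(H0)‖, ‖f(H0) A H0^k‖}` and
`A ↦ max{‖H^k A f(H)‖, ‖f(H) A H^k‖}` (`f ∈ F`, `k ∈ ℕ`) are equivalent; equivalence is
expressed by the standard mutual-domination criterion: every seminorm of one family is
bounded by a constant times a finite sum of seminorms of the other family. -/
theorem stmt3 (H0 B : Op 𝓗) (hsa0 : H0.IsSelfAdjoint)
    (hBsymm : B.Symmetric) (hdomB : (H0.dom : Set 𝓗) ⊆ B.dom)
    (hsaH : (H0.pert B).IsSelfAdjoint)
    (S0 : FnCalc H0 0) (SH : FnCalc (H0.pert B) 0)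
    (D : Set 𝓗) (hD0 : D = H0.Dinf) (hDH : D = (H0.pert B).Dinf) :
    (∀ f : ℝ → ℝ, IsInF f → ∀ k : ℕ, ∃ C : ℝ, 0 < C ∧ ∃ n : ℕ, ∃ g : Fin n → ℝ → ℝ,
      ∃ j : Fin n → ℕ, (∀ i, IsInF (g i)) ∧ ∀ A : 𝓗 →ₗ[ℂ] 𝓗, MemLdag D A →
        qseminorm S0 D f k A ≤ C * ∑ i, qseminorm SH D (g i) (j i) A) ∧
    (∀ f : ℝ → ℝ, IsInF f → ∀ k : ℕ, ∃ C : ℝ, 0 < C ∧ ∃ n : ℕ, ∃ g : Fin n → ℝ → ℝ,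
      ∃ j : Fin n → ℕ, (∀ i, IsInF (g i)) ∧ ∀ A : 𝓗 →ₗ[ℂ] 𝓗, MemLdag D A →
        qseminorm SH D f k A ≤ C * ∑ i, qseminorm S0 D (g i) (j i) A) :=
  stmt3_general H0 B hsa0 hsaH S0 SH D hD0 hDH

end Paper
end

section
/- Let H0 be a self-adjoint operator and B a symmetric perturbation with D(H0) ⊆ D(B) such that H = H0 + B is self-adjoint on D(H0), and suppose that B leaves D^∞(H0) invariant, that H0 and H commute algebraically on D^∞(H0) (i.e. H0 H f = H H0 f for all f ∈ D^∞(H0)), and that ‖H0 f‖ ≤ ‖H f‖ for all f ∈ D^∞(H0). Then for every n ∈ ℕ, ‖H0^n f‖ ≤ ‖H^n f‖ for all f ∈ D^∞(H0). -/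
open scoped ComplexInnerProductSpace

namespace Paper

variable {𝓗 : Type*} [NormedAddCommGroup 𝓗] [InnerProductSpace ℂ 𝓗]

/-!
Commuting with `H` on the invariant set `D^∞(H₀)`, `H₀` lets the bound `‖H₀ g‖ ≤ ‖H g‖` be
applied one factor at a time: `‖H₀ⁿ⁺¹ f‖ ≤ ‖H H₀ⁿ f‖ = ‖H₀ⁿ (H f)‖ ≤ ‖Hⁿ (H f)‖`, the last step
being the induction hypothesis at the vector `H f`, which again lies in `D^∞(H₀)`.
-/

section Iterate

variable {α : Type*} {A S : α → α} {D : Set α}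

theorem iterate_apply_comm_of_mapsTo (hA : Set.MapsTo A D D)
    (hcomm : ∀ x ∈ D, A (S x) = S (A x)) (n : ℕ) :
    ∀ x ∈ D, A^[n] (S x) = S (A^[n] x) := by
  induction n with
  | zero => intro x _; rfl
  | succ n ih =>
    intro x hx
    rw [Function.iterate_succ_apply, Function.iterate_succ_apply, hcomm x hx, ih (A x) (hA hx)]

theorem norm_iterate_le_of_commute [Norm α] (hA : Set.MapsTo A D D) (hS : Set.MapsTo S D D)
    (hcomm : ∀ x ∈ D, A (S x) = S (A x)) (hle : ∀ x ∈ D, ‖A x‖ ≤ ‖S x‖) (n : ℕ) :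
    ∀ x ∈ D, ‖A^[n] x‖ ≤ ‖S^[n] x‖ := by
  induction n with
  | zero => intro x _; rfl
  | succ n ih =>
    intro x hx
    calc ‖A^[n + 1] x‖ = ‖A (A^[n] x)‖ := by rw [Function.iterate_succ_apply']
      _ ≤ ‖S (A^[n] x)‖ := hle _ (hA.iterate n hx)
      _ = ‖A^[n] (S x)‖ := by rw [iterate_apply_comm_of_mapsTo hA hcomm n x hx]
      _ ≤ ‖S^[n] (S x)‖ := ih _ (hS hx)
      _ = ‖S^[n + 1] x‖ := by rw [Function.iterate_succ_apply]

end Iterate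

namespace Op

theorem add_mem_domPow (T : Op 𝓗) {x y : 𝓗} :
    ∀ {n : ℕ}, x ∈ T.domPow n → y ∈ T.domPow n → x + y ∈ T.domPow n
  | 0, _, _ => trivial
  | n + 1, hx, hy => ⟨T.dom.add_mem hx.1 hy.1, by
      simpa only [map_add] using add_mem_domPow T (n := n) hx.2 hy.2⟩

theorem add_mem_Dinf (T : Op 𝓗) {x y : 𝓗} (hx : x ∈ T.Dinf) (hy : y ∈ T.Dinf) :
    x + y ∈ T.Dinf :=
  Set.mem_iInter.2 fun n => T.add_mem_domPow (Set.mem_iInter.1 hx n) (Set.mem_iInter.1 hy n)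

theorem mapsTo_op_Dinf (T : Op 𝓗) : Set.MapsTo T.op T.Dinf T.Dinf := fun _ hx =>
  Set.mem_iInter.2 fun n => (Set.mem_iInter.1 hx (n + 1)).2

theorem mapsTo_pert_op_Dinf (T B : Op 𝓗) (hB : Set.MapsTo B.op T.Dinf T.Dinf) :
    Set.MapsTo (T.pert B).op T.Dinf T.Dinf := fun _ hx =>
  T.add_mem_Dinf (T.mapsTo_op_Dinf hx) (hB hx)

end Op

variable {𝓗 : Type*} [NormedAddCommGroup 𝓗] [InnerProductSpace ℂ 𝓗] [CompleteSpace 𝓗]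

theorem stmt13_general (H0 B : Op 𝓗)
    (hBinv : ∀ f ∈ H0.Dinf, B.op f ∈ H0.Dinf)
    (hcomm : ∀ f ∈ H0.Dinf, H0.op ((H0.pert B).op f) = (H0.pert B).op (H0.op f))
    (hbound : ∀ f ∈ H0.Dinf, ‖H0.op f‖ ≤ ‖(H0.pert B).op f‖) :
    ∀ n : ℕ, ∀ f ∈ H0.Dinf, ‖H0.pw n f‖ ≤ ‖(H0.pert B).pw n f‖ :=
  norm_iterate_le_of_commute H0.mapsTo_op_Dinf (H0.mapsTo_pert_op_Dinf B hBinv) hcomm hbound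

/-- If `B` leaves `D^∞(H0)` invariant, `H0` and `H = H0 + B` commute
algebraically on `D^∞(H0)`, and `‖H0 f‖ ≤ ‖H f‖` on `D^∞(H0)`, then for every `n ∈ ℕ`,
`‖H0^n f‖ ≤ ‖H^n f‖` for all `f ∈ D^∞(H0)`. -/
theorem stmt13 (H0 B : Op 𝓗) (hsa0 : H0.IsSelfAdjoint)
    (hBsymm : B.Symmetric) (hdomB : (H0.dom : Set 𝓗) ⊆ B.dom)
    (hsaH : (H0.pert B).IsSelfAdjoint)
    (hBinv : ∀ f ∈ H0.Dinf, B.op f ∈ H0.Dinf)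
    (hcomm : ∀ f ∈ H0.Dinf, H0.op ((H0.pert B).op f) = (H0.pert B).op (H0.op f))
    (hbound : ∀ f ∈ H0.Dinf, ‖H0.op f‖ ≤ ‖(H0.pert B).op f‖) :
    ∀ n : ℕ, ∀ f ∈ H0.Dinf, ‖H0.pw n f‖ ≤ ‖(H0.pert B).pw n f‖ :=
  stmt13_general H0 B hBinv hcomm hbound

end Paper
end
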